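/- arXiv:1912.12454 — 4 statements merged into one kernel-verified Lean document; each statement's English description precedes it below -/
import Mathlib

section
/- Let U be an open subset of a Banach space X and Y a Banach space. If f : U → Y is compact (i.e., f maps U-bounded subsets of U into relatively compact subsets of Y) and f takes U-bounded weakly p-Cauchy sequences into weakly Cauchy sequences, then f is weakly p-sequentially continuous, i.e., f takes U-bounded weakly p-Cauchy sequences into norm convergent sequences in Y. -/
open Filter Topology Metric Set
open scoped ENNReal NNReal

section Defs

variable {X Y : Type*} [NormedAddCommGroup X] [NormedSpace ℝ X]
  [NormedAddCommGroup Y] [NormedSpace ℝ Y]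

/-- A sequence `(x n)` in `X` is weakly `p`-summable if `(f (x n))ₙ ∈ ℓ_p` for every
continuous linear functional `f` (for `p = ∞`, this means `(f (x n))ₙ ∈ c₀`). -/
def WeaklyLpSummable (p : ℝ≥0∞) (x : ℕ → X) : Prop :=
  ∀ f : X →L[ℝ] ℝ,
    if p = ⊤ then Filter.Tendsto (fun n => f (x n)) Filter.atTop (nhds 0)
    else Memℓp (fun n => f (x n)) p

/-- A sequence is weakly `p`-Cauchy if all difference sequences along pairs of strictly
monotone index sequences are weakly `p`-summable. -/
def WeaklyLpCauchy (p : ℝ≥0∞) (x : ℕ → X) : Prop :=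
  ∀ m k : ℕ → ℕ, StrictMono m → StrictMono k →
    WeaklyLpSummable p (fun i => x (m i) - x (k i))

/-- `(x n)` is weakly `p`-convergent to `x₀` if `(x n - x₀)` is weakly `p`-summable. -/
def WeaklyLpConvergentTo (p : ℝ≥0∞) (x : ℕ → X) (x₀ : X) : Prop :=
  WeaklyLpSummable p (fun n => x n - x₀)

/-- A set `K ⊆ L(X,Y)` is uniformly `p`-convergent if `lim_n sup_{T ∈ K} ‖T (x n)‖ = 0`
for every weakly `p`-summable sequence `(x n)`. -/
def UniformlyPConvergent (p : ℝ≥0∞) (K : Set (X →L[ℝ] Y)) : Prop :=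
  ∀ x : ℕ → X, WeaklyLpSummable p x →
    ∀ ε > 0, ∃ N : ℕ, ∀ n ≥ N, ∀ T ∈ K, ‖T (x n)‖ < ε

/-- `B` is `U`-bounded: contained in `U`, bounded, and at positive distance from `∂U`. -/
def UBounded (U B : Set X) : Prop :=
  B ⊆ U ∧ Bornology.IsBounded B ∧ ∃ r > 0, ∀ b ∈ B, Metric.ball b r ⊆ U

/-- A sequence is `U`-bounded if its range is a `U`-bounded set. -/
def UBoundedSeq (U : Set X) (x : ℕ → X) : Prop :=
  UBounded U (Set.range x)

/-- `f ∈ C^{1u}(U,Y)`: `f` is differentiable on `U` with derivative `f'` which is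
uniformly continuous on `U`-bounded subsets of `U`. -/
def C1u (U : Set X) (f : X → Y) (f' : X → X →L[ℝ] Y) : Prop :=
  (∀ x ∈ U, HasFDerivAt f (f' x) x) ∧
  ∀ B : Set X, UBounded U B → UniformContinuousOn f' B

/-- `T` is a `p`-convergent operator: it maps weakly `p`-summable sequences to norm-null
sequences. -/
def PConvergentOp (p : ℝ≥0∞) (T : X →L[ℝ] Y) : Prop :=
  ∀ x : ℕ → X, WeaklyLpSummable p x →
    Filter.Tendsto (fun n => ‖T (x n)‖) Filter.atTop (nhds 0)

/-- `f` is weakly `p`-sequentially continuous on `U`: it maps `U`-bounded weakly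
`p`-Cauchy sequences to norm convergent sequences. -/
def WeaklyPSeqCont (p : ℝ≥0∞) (U : Set X) (f : X → Y) : Prop :=
  ∀ x : ℕ → X, UBoundedSeq U x → WeaklyLpCauchy p x →
    ∃ l : Y, Filter.Tendsto (fun n => f (x n)) Filter.atTop (nhds l)

/-- `K` is weakly `p`-precompact: every sequence in `K` has a weakly `p`-Cauchy
subsequence. -/
def WeaklyPPrecompact (p : ℝ≥0∞) (K : Set X) : Prop :=
  ∀ x : ℕ → X, (∀ n, x n ∈ K) →
    ∃ m : ℕ → ℕ, StrictMono m ∧ WeaklyLpCauchy p (fun i => x (m i))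

end Defs

/-- If `f : U → Y` is a compact mapping taking `U`-bounded weakly `p`-Cauchy sequences
into weakly Cauchy sequences, then `f` is weakly `p`-sequentially continuous. -/
theorem compact_weaklyCauchy_to_weaklyPSeqCont
    {X Y : Type*} [NormedAddCommGroup X] [NormedSpace ℝ X] [CompleteSpace X]
    [NormedAddCommGroup Y] [NormedSpace ℝ Y] [CompleteSpace Y]
    (p : ℝ≥0∞) (hp : 1 ≤ p)
    (U : Set X) (hU : IsOpen U) (f : X → Y)
    (hcompact : ∀ B : Set X, UBounded U B → IsCompact (closure (f '' B)))
    (hwc : ∀ x : ℕ → X, UBoundedSeq U x → WeaklyLpCauchy p x →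
      ∀ g : Y →L[ℝ] ℝ, ∃ l : ℝ, Filter.Tendsto (fun n => g (f (x n))) Filter.atTop (nhds l)) :
    WeaklyPSeqCont p U f := by
  intro x hxb hxc
  have hK : IsCompact (closure (f '' Set.range x)) := hcompact _ hxb
  set K := closure (f '' Set.range x) with hKdef
  have hyK : ∀ n, f (x n) ∈ K := fun n =>
    subset_closure ⟨x n, ⟨n, rfl⟩, rfl⟩
  obtain ⟨a, haK, φ, hφ, hφt⟩ := hK.tendsto_subseq hyK
  refine ⟨a, ?_⟩
  by_contra hnot
  rw [Metric.tendsto_atTop] at hnot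
  push_neg at hnot
  obtain ⟨ε, hε, hfreq⟩ := hnot
  obtain ⟨ψ, hψ, hψd⟩ := Filter.extraction_of_frequently_atTop
    (Filter.frequently_atTop.2 fun N => by
      obtain ⟨n, hn, hd⟩ := hfreq N; exact ⟨n, hn, hd⟩)
  obtain ⟨b, hbK, θ, hθ, hθt⟩ := hK.tendsto_subseq (fun k => hyK (ψ k))
  -- limits of dual pairings agree
  have hab : a = b := by
    rw [NormedSpace.eq_iff_forall_dual_eq (𝕜 := ℝ)]
    intro g
    obtain ⟨l, hl⟩ := hwc x hxb hxc g
    have h1 : Filter.Tendsto (fun k => g (f (x (φ k)))) Filter.atTop (nhds l) :=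
      hl.comp hφ.tendsto_atTop
    have h2 : Filter.Tendsto (fun k => g (f (x (ψ (θ k))))) Filter.atTop (nhds l) :=
      hl.comp ((hψ.comp hθ).tendsto_atTop)
    have h1' : Filter.Tendsto (fun k => g (f (x (φ k)))) Filter.atTop (nhds (g a)) :=
      (g.continuous.tendsto a).comp hφt
    have h2' : Filter.Tendsto (fun k => g (f (x (ψ (θ k))))) Filter.atTop (nhds (g b)) :=
      (g.continuous.tendsto b).comp hθt
    rw [tendsto_nhds_unique h1' h1, tendsto_nhds_unique h2' h2]
  -- but dist b a ≥ ε
  have hdist : ε ≤ dist b a :=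
    ge_of_tendsto' (hθt.dist tendsto_const_nhds) (fun k => hψd (θ k))
  rw [← hab, dist_self] at hdist
  exact absurd hdist (not_le.2 hε)
end

section
/- Let U be an open convex subset of X and f ∈ C^{1u}(U, Y). If the derivative f′ : U → C_p(X,Y) is weakly p-sequentially continuous (i.e., f′ takes U-bounded weakly p-Cauchy sequences in U into norm convergent sequences in L(X,Y), with values in the p-convergent operators), then f is weakly p-sequentially continuous. -/
open Filter Topology Metric Set
open scoped ENNReal NNReal

/-! To show that `f (xₙ)` is Cauchy it suffices that `f (x_{aᵢ}) - f (x_{bᵢ}) → 0` for every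
pair of subsequences. The differences `dᵢ = x_{aᵢ} - x_{bᵢ}` are weakly `p`-summable, and for
each fixed `t ∈ [0, 1]` the points `ξᵢ = x_{bᵢ} + t dᵢ` form a `U`-bounded weakly `p`-Cauchy
sequence, so `f' ξᵢ → T` for a `p`-convergent `T`, whence `f' ξᵢ dᵢ → 0`. Uniform continuity of
`f'` on the convex hull of the sequence makes these directional derivatives equicontinuous in
`t`, so the convergence is uniform on `[0, 1]`, and the mean value theorem along the segments
concludes. -/

section WeaklySummable

variable {X : Type*} [NormedAddCommGroup X] [NormedSpace ℝ X] {p : ℝ≥0∞} {x y : ℕ → X}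

theorem WeaklyLpSummable.add (hx : WeaklyLpSummable p x) (hy : WeaklyLpSummable p y) :
    WeaklyLpSummable p (fun n => x n + y n) := by
  intro g
  have hxg := hx g
  have hyg := hy g
  split_ifs at hxg hyg ⊢
  · simpa only [map_add, add_zero] using hxg.add hyg
  · simp only [map_add]
    exact hxg.add hyg

theorem WeaklyLpSummable.const_smul (c : ℝ) (hx : WeaklyLpSummable p x) :
    WeaklyLpSummable p (fun n => c • x n) := by
  intro g
  have hxg := hx g
  split_ifs at hxg ⊢
  · simpa only [map_smul, smul_eq_mul, mul_zero] using hxg.const_mul c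
  · simp only [map_smul]
    exact hxg.const_smul c

theorem WeaklyLpCauchy.comp_strictMono (hx : WeaklyLpCauchy p x) {φ : ℕ → ℕ}
    (hφ : StrictMono φ) : WeaklyLpCauchy p (fun n => x (φ n)) :=
  fun m k hm hk => hx (φ ∘ m) (φ ∘ k) (hφ.comp hm) (hφ.comp hk)

theorem WeaklyLpCauchy.add (hx : WeaklyLpCauchy p x) (hy : WeaklyLpCauchy p y) :
    WeaklyLpCauchy p (fun n => x n + y n) := by
  intro m k hm hk
  simpa only [add_sub_add_comm] using (hx m k hm hk).add (hy m k hm hk)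

theorem WeaklyLpCauchy.const_smul (c : ℝ) (hx : WeaklyLpCauchy p x) :
    WeaklyLpCauchy p (fun n => c • x n) := by
  intro m k hm hk
  simpa only [smul_sub] using (hx m k hm hk).const_smul c

theorem WeaklyLpCauchy.lineMap (hx : WeaklyLpCauchy p x) (hy : WeaklyLpCauchy p y) (c : ℝ) :
    WeaklyLpCauchy p (fun n => AffineMap.lineMap (x n) (y n) c) := by
  simpa only [AffineMap.lineMap_apply_module] using
    (hx.const_smul (1 - c)).add (hy.const_smul c)

end WeaklySummable

section UBounded

variable {X : Type*} [NormedAddCommGroup X] {U B C : Set X}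

theorem UBounded.mono (hB : UBounded U B) (hCB : C ⊆ B) : UBounded U C := by
  obtain ⟨hBU, hBb, r, hr, hball⟩ := hB
  exact ⟨hCB.trans hBU, hBb.subset hCB, r, hr, fun c hc => hball c (hCB hc)⟩

theorem convex_setOf_ball_subset [NormedSpace ℝ X] (hU : Convex ℝ U) (r : ℝ) :
    Convex ℝ {b : X | ball b r ⊆ U} := by
  have hinter : {b : X | ball b r ⊆ U} = ⋂ v ∈ ball (0 : X) r, (· + v) ⁻¹' U := by
    ext b
    simp only [mem_iInter, mem_preimage, mem_ball_zero_iff]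
    refine ⟨fun h v hv => h (by simpa [dist_eq_norm] using hv), fun h y hy => ?_⟩
    simpa using h (y - b) (by simpa [dist_eq_norm] using hy)
  rw [hinter]
  exact convex_iInter₂ fun v _ => hU.translate_preimage_left v

theorem UBounded.convexHull [NormedSpace ℝ X] (hU : Convex ℝ U) (hB : UBounded U B) :
    UBounded U (convexHull ℝ B) := by
  obtain ⟨hBU, hBb, r, hr, hball⟩ := hB
  have hhull := convexHull_min hball (convex_setOf_ball_subset hU r)
  exact ⟨convexHull_min hBU hU, isBounded_convexHull.2 hBb, r, hr, fun b hb => hhull hb⟩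

end UBounded

theorem cauchySeq_of_forall_strictMono_tendsto_sub {E : Type*} [SeminormedAddCommGroup E]
    {u : ℕ → E} (h : ∀ a b : ℕ → ℕ, StrictMono a → StrictMono b →
      Tendsto (fun i => u (a i) - u (b i)) atTop (𝓝 0)) :
    CauchySeq u := by
  rw [Metric.cauchySeq_iff]
  by_contra! hnot
  obtain ⟨ε, hε, hfar⟩ := hnot
  choose m hm n hn hdist using hfar
  obtain ⟨φ, hφ, hmφ⟩ := strictMono_subseq_of_tendsto_atTop (tendsto_atTop_mono hm tendsto_id)
  obtain ⟨ψ, hψ, hnψ⟩ :=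
    strictMono_subseq_of_tendsto_atTop
      ((tendsto_atTop_mono hn tendsto_id).comp hφ.tendsto_atTop)
  have hsmall := (h _ _ (hmφ.comp hψ) hnψ).eventually (ball_mem_nhds 0 hε)
  obtain ⟨i, hi⟩ := hsmall.exists
  exact (hdist (φ (ψ i))).not_gt (by simpa [dist_eq_norm] using hi)

section Segments

open AffineMap

variable {E F : Type*} [NormedAddCommGroup E] [NormedSpace ℝ E] [NormedAddCommGroup F]
  [NormedSpace ℝ F] {f : E → F} {f' : E → E →L[ℝ] F} {s : Set E}

theorem norm_image_sub_le_of_norm_fderiv_apply_lineMap_le (hs : Convex ℝ s)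
    (hf : ∀ x ∈ s, HasFDerivWithinAt f (f' x) s x) {x y : E} (hx : x ∈ s) (hy : y ∈ s) {C : ℝ}
    (bound : ∀ t ∈ Icc (0 : ℝ) 1, ‖f' (lineMap x y t) (y - x)‖ ≤ C) :
    ‖f y - f x‖ ≤ C := by
  have hmaps := hs.mapsTo_lineMap hx hy
  have hderiv : ∀ t ∈ Icc (0 : ℝ) 1,
      HasDerivWithinAt (f ∘ lineMap x y) (f' (lineMap x y t) (y - x)) (Icc 0 1) t :=
    fun t ht => (hf _ (hmaps ht)).comp_hasDerivWithinAt t hasDerivWithinAt_lineMap hmaps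
  simpa using norm_image_sub_le_of_norm_deriv_le_segment_01' hderiv
    fun t ht => bound t (Ico_subset_Icc_self ht)

theorem uniformEquicontinuous_fderiv_apply_lineMap {ι : Type*} (hs : Convex ℝ s)
    (hsb : Bornology.IsBounded s) (hf' : UniformContinuousOn f' s) {x y : ι → E}
    (hx : ∀ i, x i ∈ s) (hy : ∀ i, y i ∈ s) :
    UniformEquicontinuous
      fun i (t : Icc (0 : ℝ) 1) => f' (lineMap (x i) (y i) (t : ℝ)) (y i - x i) := by
  obtain ⟨R, hR, hsR⟩ := hsb.exists_pos_norm_le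
  have hxy : ∀ i, ‖y i - x i‖ ≤ 2 * R := fun i =>
    (norm_sub_le _ _).trans (by linarith [hsR _ (hx i), hsR _ (hy i)])
  rw [Metric.uniformContinuousOn_iff] at hf'
  rw [Metric.uniformEquicontinuous_iff]
  intro ε hε
  obtain ⟨δ, hδ, hclose⟩ := hf' (ε / (4 * R)) (by positivity)
  refine ⟨δ / (2 * R), by positivity, fun t u htu i => ?_⟩
  set p := lineMap (x i) (y i) (t : ℝ)
  set q := lineMap (x i) (y i) (u : ℝ)
  have hpq : dist p q < δ := by
    rw [dist_lineMap_lineMap, dist_comm (x i), dist_eq_norm (y i)]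
    calc dist (t : ℝ) u * ‖y i - x i‖ ≤ dist (t : ℝ) u * (2 * R) := by gcongr; exact hxy i
      _ < δ / (2 * R) * (2 * R) := by gcongr; exact htu
      _ = δ := by field_simp
  have hf'pq :=
    hclose p (hs.lineMap_mem (hx i) (hy i) t.2) q (hs.lineMap_mem (hx i) (hy i) u.2) hpq
  rw [dist_eq_norm] at hf'pq ⊢
  calc ‖f' p (y i - x i) - f' q (y i - x i)‖ = ‖(f' p - f' q) (y i - x i)‖ := by simp
    _ ≤ ‖f' p - f' q‖ * ‖y i - x i‖ := ContinuousLinearMap.le_opNorm _ _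
    _ ≤ ε / (4 * R) * (2 * R) := by gcongr; exact hxy i
    _ < ε := by field_simp; linarith

theorem tendsto_image_sub_of_tendsto_fderiv_apply_lineMap {ι : Type*} {l : Filter ι}
    (hs : Convex ℝ s) (hsb : Bornology.IsBounded s)
    (hf : ∀ x ∈ s, HasFDerivWithinAt f (f' x) s x) (hf' : UniformContinuousOn f' s)
    {x y : ι → E} (hx : ∀ i, x i ∈ s) (hy : ∀ i, y i ∈ s)
    (hdir : ∀ t ∈ Icc (0 : ℝ) 1,
      Tendsto (fun i => f' (lineMap (x i) (y i) t) (y i - x i)) l (𝓝 0)) :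
    Tendsto (fun i => f (y i) - f (x i)) l (𝓝 0) := by
  -- Ascoli: pointwise convergence of an equicontinuous family on `[0, 1]` is uniform.
  have hunif : TendstoUniformly
      (fun i (t : Icc (0 : ℝ) 1) => f' (lineMap (x i) (y i) (t : ℝ)) (y i - x i)) 0 l := by
    refine UniformFun.tendsto_iff_tendstoUniformly.1 ?_
    exact ((uniformEquicontinuous_fderiv_apply_lineMap hs hsb hf' hx hy).equicontinuous
      |>.tendsto_uniformFun_iff_pi l 0).2 (tendsto_pi_nhds.2 fun t => hdir t t.2)
  rw [Metric.tendsto_nhds]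
  intro ε hε
  filter_upwards [Metric.tendstoUniformly_iff.1 hunif (ε / 2) (half_pos hε)] with i hi
  rw [dist_zero_right]
  refine (norm_image_sub_le_of_norm_fderiv_apply_lineMap_le hs hf (hx i) (hy i)
    fun t ht => ?_).trans_lt (half_lt_self hε)
  simpa only [Pi.zero_apply, dist_zero_left] using (hi ⟨t, ht⟩).le

end Segments

theorem tendsto_apply_zero_of_tendsto_of_isBoundedUnder {𝕜 E F ι : Type*}
    [NontriviallyNormedField 𝕜] [NormedAddCommGroup E] [NormedSpace 𝕜 E] [NormedAddCommGroup F]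
    [NormedSpace 𝕜 F] {l : Filter ι} {L : ι → E →L[𝕜] F} {T : E →L[𝕜] F} {v : ι → E}
    (hL : Tendsto L l (𝓝 T)) (hv : IsBoundedUnder (· ≤ ·) l (norm ∘ v))
    (hT : Tendsto (fun i => T (v i)) l (𝓝 0)) :
    Tendsto (fun i => L i (v i)) l (𝓝 0) := by
  have hdiff := (tendsto_sub_nhds_zero_iff.2 hL).op_zero_isBoundedUnder_le hv
    (fun A w => A w) fun A w => A.le_opNorm w
  simpa using hdiff.add hT

theorem deriv_weaklyPSeqCont_imp_weaklyPSeqCont_general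
    {X Y : Type*} [NormedAddCommGroup X] [NormedSpace ℝ X]
    [NormedAddCommGroup Y] [NormedSpace ℝ Y] [CompleteSpace Y]
    (p : ℝ≥0∞)
    (U : Set X) (hUc : Convex ℝ U)
    (f : X → Y) (f' : X → X →L[ℝ] Y) (hf : C1u U f f')
    (hseq : ∀ x : ℕ → X, UBoundedSeq U x → WeaklyLpCauchy p x →
      ∃ T : X →L[ℝ] Y, PConvergentOp p T ∧
        Filter.Tendsto (fun n => f' (x n)) Filter.atTop (nhds T)) :
    WeaklyPSeqCont p U f := by
  intro x hx hxC
  refine cauchySeq_tendsto_of_complete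
    (cauchySeq_of_forall_strictMono_tendsto_sub fun a b ha hb => ?_)
  set B := convexHull ℝ (range x)
  have hB : UBounded U B := hx.convexHull hUc
  have hxB : ∀ n, x n ∈ B := fun n => subset_convexHull ℝ _ (mem_range_self n)
  refine tendsto_image_sub_of_tendsto_fderiv_apply_lineMap (convex_convexHull ℝ _) hB.2.1
    (fun z hz => (hf.1 z (hB.1 hz)).hasFDerivWithinAt) (hf.2 B hB) (fun i => hxB (b i))
    (fun i => hxB (a i)) fun t ht => ?_
  have hsegment : ∀ i, AffineMap.lineMap (x (b i)) (x (a i)) t ∈ B := fun i =>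
    (convex_convexHull ℝ _).lineMap_mem (hxB _) (hxB _) ht
  obtain ⟨T, hT, hlim⟩ := hseq _ (hB.mono (range_subset_iff.2 hsegment))
    ((hxC.comp_strictMono hb).lineMap (hxC.comp_strictMono ha) t)
  obtain ⟨R, hR⟩ := hx.2.1.exists_norm_le
  have hbdd : IsBoundedUnder (· ≤ ·) atTop (norm ∘ fun i => x (a i) - x (b i)) :=
    isBoundedUnder_of ⟨R + R, fun i => (norm_sub_le _ _).trans
      (add_le_add (hR _ (mem_range_self _)) (hR _ (mem_range_self _)))⟩
  exact tendsto_apply_zero_of_tendsto_of_isBoundedUnder hlim hbdd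
    (tendsto_zero_iff_norm_tendsto_zero.2 (hT _ (hxC a b ha hb)))

/-- If `f ∈ C^{1u}(U,Y)` and `f'` is weakly `p`-sequentially continuous with values in
the `p`-convergent operators, then `f` is weakly `p`-sequentially continuous. -/
theorem deriv_weaklyPSeqCont_imp_weaklyPSeqCont
    {X Y : Type*} [NormedAddCommGroup X] [NormedSpace ℝ X] [CompleteSpace X]
    [NormedAddCommGroup Y] [NormedSpace ℝ Y] [CompleteSpace Y]
    (p : ℝ≥0∞) (hp : 1 ≤ p)
    (U : Set X) (hU : IsOpen U) (hUc : Convex ℝ U)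
    (f : X → Y) (f' : X → X →L[ℝ] Y) (hf : C1u U f f')
    (hvals : ∀ x ∈ U, PConvergentOp p (f' x))
    (hseq : ∀ x : ℕ → X, UBoundedSeq U x → WeaklyLpCauchy p x →
      ∃ T : X →L[ℝ] Y, PConvergentOp p T ∧
        Filter.Tendsto (fun n => f' (x n)) Filter.atTop (nhds T)) :
    WeaklyPSeqCont p U f :=
  deriv_weaklyPSeqCont_imp_weaklyPSeqCont_general p U hUc f f' hf hseq
end

section
/- Let U ⊆ X be open convex and f ∈ C^{1u}(U,Y). Suppose that for every U-bounded weakly p-Cauchy sequence (x_n) in U and every bounded weakly p-Cauchy sequence (h_n) in X, the sequence (f′(x_n)(h_n)) is norm convergent in Y. Then for every U-bounded weakly p-Cauchy sequence (x_n) and every weakly p-summable sequence (h_n) in X, lim_n sup_m ‖f′(x_m)(h_n)‖ = 0. -/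
/-!
If the conclusion fails for some `ε`, there are `n k → ∞` and `m k` with
`ε ≤ ‖f' (x (m k)) (h (n k))‖`. After passing to a subsequence, `m` is strictly increasing or
constant, so `x ∘ m` is again weakly `p`-Cauchy. The sequence `b` equal to `h (n k)` at even `k`
and to `0` at odd `k` is weakly `p`-summable, hence bounded and weakly `p`-Cauchy, so
`f' (x (m k)) (b k)` converges by hypothesis. The odd terms force the limit to be `0`, which the
even terms contradict.
-/

open Filter Topology Metric Set
open scoped ENNReal NNReal

open Function

theorem Memℓp.comp_injective {α β E : Type*} [NormedAddCommGroup E] {p : ℝ≥0∞} {a : α → E}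
    (ha : Memℓp a p) {φ : β → α} (hφ : Injective φ) : Memℓp (a ∘ φ) p := by
  obtain rfl | rfl | hp := p.trichotomy
  · rw [memℓp_zero_iff] at ha ⊢
    exact ha.preimage hφ.injOn
  · rw [memℓp_infty_iff] at ha ⊢
    exact ha.mono (range_comp_subset_range φ fun i => ‖a i‖)
  · rw [memℓp_gen_iff hp] at ha ⊢
    exact ha.comp_injective hφ

theorem Nat.exists_strictMono_subseq_strictMono_or_const (M : ℕ → ℕ) :
    ∃ ψ : ℕ → ℕ, StrictMono ψ ∧ (StrictMono (M ∘ ψ) ∨ ∃ c, M ∘ ψ = fun _ => c) := by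
  by_cases hrec : ∃ c, ∃ᶠ k in atTop, M k = c
  · obtain ⟨c, hc⟩ := hrec
    obtain ⟨ψ, hψ, hψc⟩ := extraction_of_frequently_atTop hc
    exact ⟨ψ, hψ, .inr ⟨c, funext hψc⟩⟩
  · push Not at hrec
    have hM : Tendsto M atTop atTop := tendsto_atTop.2 fun C =>
      ((Finset.range C).eventually_all.2 fun c _ => hrec c).mono fun k hk => by
        by_contra! hlt
        exact hk (M k) (Finset.mem_range.2 hlt) rfl
    obtain ⟨ψ, hψ, hMψ⟩ := strictMono_subseq_of_tendsto_atTop hM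
    exact ⟨ψ, hψ, .inl hMψ⟩

theorem isBounded_range_of_weakly_bounded {𝕜 E ι : Type*} [RCLike 𝕜] [NormedAddCommGroup E]
    [NormedSpace 𝕜 E] {x : ι → E} (hx : ∀ f : StrongDual 𝕜 E, ∃ C, ∀ i, ‖f (x i)‖ ≤ C) :
    Bornology.IsBounded (range x) := by
  obtain ⟨C, hC⟩ :=
    banach_steinhaus (g := fun i => NormedSpace.inclusionInDoubleDualLi 𝕜 (x i)) hx
  rw [isBounded_iff_forall_norm_le]
  exact ⟨C, forall_mem_range.2 fun i =>
    (NormedSpace.inclusionInDoubleDualLi 𝕜).norm_map (x i) ▸ hC i⟩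

def MemℓpC₀ {E : Type*} [NormedAddCommGroup E] (p : ℝ≥0∞) (a : ℕ → E) : Prop :=
  if p = ⊤ then Tendsto a atTop (𝓝 0) else Memℓp a p

namespace MemℓpC₀

variable {E : Type*} [NormedAddCommGroup E] {p : ℝ≥0∞} {a b : ℕ → E}

theorem zero : MemℓpC₀ p fun _ => (0 : E) := by
  unfold MemℓpC₀
  split_ifs
  · exact tendsto_const_nhds
  · exact zero_memℓp

theorem sub (ha : MemℓpC₀ p a) (hb : MemℓpC₀ p b) : MemℓpC₀ p (a - b) := by
  unfold MemℓpC₀ at *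
  split_ifs at *
  · rw [← sub_zero (0 : E)]
    exact ha.sub hb
  · exact ha.sub hb

theorem comp_injective (ha : MemℓpC₀ p a) {φ : ℕ → ℕ} (hφ : Injective φ) :
    MemℓpC₀ p (a ∘ φ) := by
  unfold MemℓpC₀ at *
  split_ifs at *
  · exact ha.comp hφ.nat_tendsto_atTop
  · exact ha.comp_injective hφ

theorem mono' {F : Type*} [NormedAddCommGroup F] {c : ℕ → F} (hc : MemℓpC₀ p c)
    (hac : ∀ i, ‖a i‖ ≤ ‖c i‖) : MemℓpC₀ p a := by
  unfold MemℓpC₀ at *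
  split_ifs at *
  · exact squeeze_zero_norm hac (tendsto_zero_iff_norm_tendsto_zero.1 hc)
  · exact hc.mono' hac

theorem exists_norm_le (ha : MemℓpC₀ p a) : ∃ C, ∀ i, ‖a i‖ ≤ C := by
  unfold MemℓpC₀ at ha
  split_ifs at ha
  · obtain ⟨C, hC⟩ := ha.norm.bddAbove_range
    exact ⟨C, fun i => hC (mem_range_self i)⟩
  · obtain ⟨C, hC⟩ := (ha.of_exponent_ge le_top).bddAbove
    exact ⟨C, fun i => hC (mem_range_self i)⟩

end MemℓpC₀

theorem UBoundedSeq.comp {X : Type*} [NormedAddCommGroup X] {U : Set X} {x : ℕ → X}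
    (hx : UBoundedSeq U x) (M : ℕ → ℕ) : UBoundedSeq U (x ∘ M) := by
  obtain ⟨hxU, hxb, r, hr, hball⟩ := hx
  have hsub := range_comp_subset_range M x
  exact ⟨hsub.trans hxU, hxb.subset hsub, r, hr, fun b hb => hball b (hsub hb)⟩

section WeaklyLp

variable {X : Type*} [NormedAddCommGroup X] [NormedSpace ℝ X] {p : ℝ≥0∞} {x y : ℕ → X}

theorem weaklyLpSummable_iff :
    WeaklyLpSummable p x ↔ ∀ f : X →L[ℝ] ℝ, MemℓpC₀ p (f ∘ x) :=
  Iff.rfl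

theorem weaklyLpSummable_zero : WeaklyLpSummable p fun _ => (0 : X) :=
  weaklyLpSummable_iff.2 fun f => by simpa [Function.comp_def] using MemℓpC₀.zero

namespace WeaklyLpSummable

theorem sub (hx : WeaklyLpSummable p x) (hy : WeaklyLpSummable p y) :
    WeaklyLpSummable p (x - y) :=
  weaklyLpSummable_iff.2 fun f => by
    simpa only [Function.comp_def, Pi.sub_def, map_sub] using
      (weaklyLpSummable_iff.1 hx f).sub (weaklyLpSummable_iff.1 hy f)

theorem comp_injective (hx : WeaklyLpSummable p x) {φ : ℕ → ℕ} (hφ : Injective φ) :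
    WeaklyLpSummable p (x ∘ φ) :=
  weaklyLpSummable_iff.2 fun f => (weaklyLpSummable_iff.1 hx f).comp_injective hφ

theorem indicator (hx : WeaklyLpSummable p x) (s : Set ℕ) :
    WeaklyLpSummable p (s.indicator x) :=
  weaklyLpSummable_iff.2 fun f => (weaklyLpSummable_iff.1 hx f).mono' fun i => by
    by_cases hi : i ∈ s <;> simp [hi]

theorem isBounded_range (hx : WeaklyLpSummable p x) : Bornology.IsBounded (range x) :=
  isBounded_range_of_weakly_bounded fun f => (weaklyLpSummable_iff.1 hx f).exists_norm_le

theorem weaklyLpCauchy (hx : WeaklyLpSummable p x) : WeaklyLpCauchy p x :=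
  fun _ _ hm hk => (hx.comp_injective hm.injective).sub (hx.comp_injective hk.injective)

end WeaklyLpSummable

theorem weaklyLpCauchy_const (c : X) : WeaklyLpCauchy p fun _ => c :=
  fun _ _ _ _ => by simpa only [sub_self] using weaklyLpSummable_zero

theorem WeaklyLpCauchy.comp_strictMono_s10 (hx : WeaklyLpCauchy p x) {M : ℕ → ℕ}
    (hM : StrictMono M) : WeaklyLpCauchy p (x ∘ M) :=
  fun _ _ hm hk => hx _ _ (hM.comp hm) (hM.comp hk)

theorem WeaklyLpCauchy.exists_strictMono_comp (hx : WeaklyLpCauchy p x) (M : ℕ → ℕ) :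
    ∃ ψ : ℕ → ℕ, StrictMono ψ ∧ WeaklyLpCauchy p (x ∘ M ∘ ψ) := by
  obtain ⟨ψ, hψ, hMψ | ⟨c, hc⟩⟩ := Nat.exists_strictMono_subseq_strictMono_or_const M
  · exact ⟨ψ, hψ, hx.comp_strictMono_s10 hMψ⟩
  · exact ⟨ψ, hψ, hc ▸ weaklyLpCauchy_const (x c)⟩

end WeaklyLp

theorem deriv_pairing_convergent_imp_uniform_limit_general
    {X Y : Type*} [NormedAddCommGroup X] [NormedSpace ℝ X]
    [NormedAddCommGroup Y] [NormedSpace ℝ Y]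
    (p : ℝ≥0∞)
    (U : Set X)
    (f' : X → X →L[ℝ] Y)
    (H : ∀ x : ℕ → X, UBoundedSeq U x → WeaklyLpCauchy p x →
      ∀ h : ℕ → X, Bornology.IsBounded (Set.range h) → WeaklyLpCauchy p h →
        ∃ l : Y, Filter.Tendsto (fun n => f' (x n) (h n)) Filter.atTop (nhds l)) :
    ∀ x : ℕ → X, UBoundedSeq U x → WeaklyLpCauchy p x →
      ∀ h : ℕ → X, WeaklyLpSummable p h →
        ∀ ε > 0, ∃ N : ℕ, ∀ n ≥ N, ∀ m : ℕ, ‖f' (x m) (h n)‖ < ε := by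
  intro x hxU hxC h hh ε hε
  by_contra! hbad
  obtain ⟨n, hn, hbad⟩ := extraction_of_frequently_atTop (frequently_atTop.2 hbad)
  choose m hm using hbad
  obtain ⟨ψ, hψ, hxmψ⟩ := hxC.exists_strictMono_comp m
  set a := x ∘ m ∘ ψ
  set b := {i | Even i}.indicator (h ∘ n ∘ ψ)
  have hb : WeaklyLpSummable p b := (hh.comp_injective (hn.comp hψ).injective).indicator _
  obtain ⟨l, hl⟩ := H a (hxU.comp _) hxmψ b hb.isBounded_range hb.weaklyLpCauchy
  have hodd : ∃ᶠ i in atTop, f' (a i) (b i) = 0 :=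
    Nat.frequently_odd.mono fun i hi => by simp [b, Nat.not_even_iff_odd.2 hi]
  have heven : ∃ᶠ i in atTop, ε ≤ ‖f' (a i) (b i)‖ :=
    Nat.frequently_even.mono fun i hi => by simpa [a, b, hi] using hm (ψ i)
  have hl0 : l = 0 := tendsto_nhds_unique_of_frequently_eq hl tendsto_const_nhds hodd
  subst hl0
  have hsmall : ∀ᶠ i in atTop, ‖f' (a i) (b i)‖ < ε :=
    (tendsto_zero_iff_norm_tendsto_zero.1 hl).eventually (gt_mem_nhds hε)
  obtain ⟨i, hlt, hge⟩ := (hsmall.and_frequently heven).exists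
  exact hge.not_gt hlt

/-- If `(f' (x n) (h n))` converges for all `U`-bounded weakly `p`-Cauchy `(x n)` and
bounded weakly `p`-Cauchy `(h n)`, then `lim_n sup_m ‖f' (x m) (h n)‖ = 0` for every
`U`-bounded weakly `p`-Cauchy `(x n)` and weakly `p`-summable `(h n)`. -/
theorem deriv_pairing_convergent_imp_uniform_limit
    {X Y : Type*} [NormedAddCommGroup X] [NormedSpace ℝ X] [CompleteSpace X]
    [NormedAddCommGroup Y] [NormedSpace ℝ Y] [CompleteSpace Y]
    (p : ℝ≥0∞) (hp : 1 ≤ p)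
    (U : Set X) (hU : IsOpen U) (hUc : Convex ℝ U)
    (f : X → Y) (f' : X → X →L[ℝ] Y) (hf : C1u U f f')
    (H : ∀ x : ℕ → X, UBoundedSeq U x → WeaklyLpCauchy p x →
      ∀ h : ℕ → X, Bornology.IsBounded (Set.range h) → WeaklyLpCauchy p h →
        ∃ l : Y, Filter.Tendsto (fun n => f' (x n) (h n)) Filter.atTop (nhds l)) :
    ∀ x : ℕ → X, UBoundedSeq U x → WeaklyLpCauchy p x →
      ∀ h : ℕ → X, WeaklyLpSummable p h →
        ∀ ε > 0, ∃ N : ℕ, ∀ n ≥ N, ∀ m : ℕ, ‖f' (x m) (h n)‖ < ε :=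
  deriv_pairing_convergent_imp_uniform_limit_general p U f' H
end

section
/- Let U ⊆ X be open convex and f ∈ C^{1u}(U,Y). Suppose that for every U-bounded weakly p-Cauchy sequence (x_n) in U and every weakly p-summable sequence (h_n) in X, f′(x_n)(h_n) → 0 in norm. Then f′ takes U-bounded weakly p-precompact subsets of U into uniformly p-convergent subsets of L(X,Y). -/
open Filter Topology Metric Set
open scoped ENNReal NNReal

lemma weaklyLpSummable_comp {X : Type*} [NormedAddCommGroup X] [NormedSpace ℝ X]
    {p : ℝ≥0∞} (hp : 1 ≤ p) {h : ℕ → X} (hh : WeaklyLpSummable p h)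
    {φ : ℕ → ℕ} (hφ : StrictMono φ) : WeaklyLpSummable p (fun i => h (φ i)) := by
  intro g
  have hg := hh g
  by_cases hpt : p = ⊤
  · simp only [hpt, if_true] at hg ⊢
    exact hg.comp hφ.tendsto_atTop
  · simp only [hpt, if_false] at hg ⊢
    have hptr : 0 < p.toReal := ENNReal.toReal_pos (lt_of_lt_of_le one_pos hp).ne' hpt
    rw [memℓp_gen_iff hptr] at hg ⊢
    exact hg.comp_injective hφ.injective

/-- If `f' (x n) (h n) → 0` for all `U`-bounded weakly `p`-Cauchy `(x n)` and weakly
`p`-summable `(h n)`, then `f'` maps `U`-bounded weakly `p`-precompact sets into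
uniformly `p`-convergent subsets of `L(X,Y)`. -/
theorem deriv_maps_precompact_to_uniformlyPConvergent
    {X Y : Type*} [NormedAddCommGroup X] [NormedSpace ℝ X] [CompleteSpace X]
    [NormedAddCommGroup Y] [NormedSpace ℝ Y] [CompleteSpace Y]
    (p : ℝ≥0∞) (hp : 1 ≤ p)
    (U : Set X) (hU : IsOpen U) (hUc : Convex ℝ U)
    (f : X → Y) (f' : X → X →L[ℝ] Y) (hf : C1u U f f')
    (H : ∀ x : ℕ → X, UBoundedSeq U x → WeaklyLpCauchy p x →
      ∀ h : ℕ → X, WeaklyLpSummable p h →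
        Filter.Tendsto (fun n => f' (x n) (h n)) Filter.atTop (nhds 0)) :
    ∀ K : Set X, UBounded U K → WeaklyPPrecompact p K →
      UniformlyPConvergent p (f' '' K) := by
  intro K hK hKpre
  intro h hh ε hε
  by_contra hcon
  push_neg at hcon
  have hfreq : ∃ᶠ n in atTop, ∃ x ∈ K, ε ≤ ‖f' x (h n)‖ := by
    rw [Filter.frequently_atTop]
    intro N
    obtain ⟨n, hn, T, ⟨x, hxK, hxT⟩, hTn⟩ := hcon N
    exact ⟨n, hn, x, hxK, by rwa [hxT]⟩
  obtain ⟨φ, hφ, hφP⟩ := Filter.extraction_of_frequently_atTop hfreq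
  choose x hxK hxb using hφP
  obtain ⟨m, hm, hxc⟩ := hKpre x hxK
  have hub : UBoundedSeq U (fun i => x (m i)) := by
    obtain ⟨hKU, hKb, r, hr, hrb⟩ := hK
    refine ⟨?_, hKb.subset ?_, r, hr, ?_⟩
    · rintro _ ⟨i, rfl⟩; exact hKU (hxK (m i))
    · rintro _ ⟨i, rfl⟩; exact hxK (m i)
    · rintro _ ⟨i, rfl⟩; exact hrb _ (hxK (m i))
  have hhs : WeaklyLpSummable p (fun i => h (φ (m i))) :=
    weaklyLpSummable_comp hp hh (hφ.comp hm)
  have := H (fun i => x (m i)) hub hxc (fun i => h (φ (m i))) hhs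
  have hnorm : Tendsto (fun i => ‖f' (x (m i)) (h (φ (m i)))‖) atTop (nhds 0) := by
    simpa using this.norm
  rw [Metric.tendsto_atTop] at hnorm
  obtain ⟨N, hN⟩ := hnorm ε hε
  have := hN N le_rfl
  have := hxb (m N)
  simp only [Real.dist_eq, sub_zero] at hN
  have h1 := hN N le_rfl
  rw [abs_of_nonneg (norm_nonneg _)] at h1
  exact absurd (hxb (m N)) (not_le.2 h1)
end
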